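/- arXiv:1905.01148 — 7 statements merged into one kernel-verified Lean document; each statement's English description precedes it below -/
import Mathlib

section
/- Let 𝒜 be an abelian length category, 𝒰 ⊆ 𝒯 torsion classes in 𝒜, and 𝒲 := 𝒰^⊥ ∩ 𝒯. Then every object T ∈ 𝒯 fits into a short exact sequence 0 → U → T → W → 0 with U ∈ 𝒰 and W ∈ 𝒲, unique up to isomorphism of short exact sequences; consequently 𝒯 = 𝒰 * 𝒲. -/
open CategoryTheory CategoryTheory.Limits

universe v u

attribute [local instance] CategoryTheory.Abelian.hasFiniteBiproducts

variable (C : Type u) [Category.{v} C] [Abelian C]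

/-- The right Hom-perpendicular category of a class of objects. -/
def RPerp (X : Set C) : Set C := {Y | ∀ A ∈ X, ∀ f : A ⟶ Y, f = 0}

/-- The left Hom-perpendicular category of a class of objects. -/
def LPerp (X : Set C) : Set C := {Y | ∀ A ∈ X, ∀ f : Y ⟶ A, f = 0}

/-- A torsion class: a class of objects containing the zero objects and closed under
quotients and extensions. -/
structure IsTorsionClass (T : Set C) : Prop where
  zero_mem : ∀ Z : C, IsZero Z → Z ∈ T
  quot_mem : ∀ ⦃A B : C⦄ (f : A ⟶ B), Epi f → A ∈ T → B ∈ T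
  ext_mem : ∀ E : ShortComplex C, E.ShortExact → E.X₁ ∈ T → E.X₃ ∈ T → E.X₂ ∈ T

/-- A torsion-free class: a class of objects containing the zero objects and closed under
subobjects and extensions. -/
structure IsTorsionFreeClass (F : Set C) : Prop where
  zero_mem : ∀ Z : C, IsZero Z → Z ∈ F
  sub_mem : ∀ ⦃A B : C⦄ (f : A ⟶ B), Mono f → B ∈ F → A ∈ F
  ext_mem : ∀ E : ShortComplex C, E.ShortExact → E.X₁ ∈ F → E.X₃ ∈ F → E.X₂ ∈ F

/-- The smallest torsion class containing a class of objects. -/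
def torsClosure (X : Set C) : Set C := ⋂₀ {T | IsTorsionClass C T ∧ X ⊆ T}

/-- The smallest torsion-free class containing a class of objects. -/
def torfClosure (X : Set C) : Set C := ⋂₀ {F | IsTorsionFreeClass C F ∧ X ⊆ F}

/-- `ExtStar U W` is the class of objects `X` admitting a short exact sequence
`0 → U' → X → W' → 0` with `U' ∈ U` and `W' ∈ W`. -/
def ExtStar (U W : Set C) : Set C :=
  {X | ∃ E : ShortComplex C, E.ShortExact ∧ E.X₁ ∈ U ∧ E.X₃ ∈ W ∧ Nonempty (E.X₂ ≅ X)}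

/-- The additive closure of a class of objects: direct summands of finite direct sums. -/
def AddClosure (S : Set C) : Set C :=
  {X | ∃ (n : ℕ) (c : Fin n → C), (∀ i, c i ∈ S) ∧ ∃ f : (⨁ c) ⟶ X, IsSplitEpi f}

/-- Membership in the filtration closure `Filt S`: objects admitting a finite filtration
with subquotients in `AddClosure S`. -/
inductive FiltMem (S : Set C) : C → Prop
  | of_isZero (X : C) : IsZero X → FiltMem S X
  | ext (E : ShortComplex C) : E.ShortExact → FiltMem S E.X₁ →
      E.X₃ ∈ AddClosure C S → FiltMem S E.X₂
  | of_iso (X Y : C) (e : X ≅ Y) : FiltMem S X → FiltMem S Y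

/-- The filtration closure of a class of objects. -/
def Filt (S : Set C) : Set C := {X | FiltMem C S X}

/-- The class of quotients of objects of the additive closure of `S`. -/
def Fac (S : Set C) : Set C := {X | ∃ A ∈ AddClosure C S, ∃ f : A ⟶ X, Epi f}

/-- The class of subobjects of objects of the additive closure of `S`. -/
def Subm (S : Set C) : Set C := {X | ∃ A ∈ AddClosure C S, ∃ f : X ⟶ A, Mono f}

/-- A wide subcategory: closed under kernels, cokernels and extensions
(and containing the zero objects). -/
structure IsWide (W : Set C) : Prop where
  zero_mem : ∀ Z : C, IsZero Z → Z ∈ W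
  ker_mem : ∀ ⦃X Y : C⦄ (f : X ⟶ Y), X ∈ W → Y ∈ W → kernel f ∈ W
  coker_mem : ∀ ⦃X Y : C⦄ (f : X ⟶ Y), X ∈ W → Y ∈ W → cokernel f ∈ W
  ext_mem : ∀ E : ShortComplex C, E.ShortExact → E.X₁ ∈ W → E.X₃ ∈ W → E.X₂ ∈ W

/-- A brick: a nonzero object all of whose nonzero endomorphisms are invertible
(equivalently, the endomorphism ring is a division ring). -/
def IsBrick (S : C) : Prop := ¬ IsZero S ∧ ∀ f : S ⟶ S, f = 0 ∨ IsIso f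

/-- A simple object of the full abelian subcategory determined by a wide subcategory `W`. -/
def IsSimpleIn (W : Set C) (S : C) : Prop :=
  S ∈ W ∧ ¬ IsZero S ∧ ∀ ⦃A : C⦄ (f : A ⟶ S), A ∈ W → Mono f → IsZero A ∨ IsIso f

/-- A Hasse arrow `T → U` in the poset of torsion classes: `U ⊊ T` are adjacent. -/
def IsHasseArrow (T U : Set C) : Prop :=
  IsTorsionClass C T ∧ IsTorsionClass C U ∧ U ⊂ T ∧
    ∀ V : Set C, IsTorsionClass C V → U ⊆ V → V ⊆ T → V = U ∨ V = T

/-- A Hasse arrow `F → G` in the poset of torsion-free classes: `G ⊊ F` are adjacent. -/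
def IsHasseArrowTorf (F G : Set C) : Prop :=
  IsTorsionFreeClass C F ∧ IsTorsionFreeClass C G ∧ G ⊂ F ∧
    ∀ H : Set C, IsTorsionFreeClass C H → G ⊆ H → H ⊆ F → H = G ∨ H = F

/-- The brick label of a Hasse arrow `T → U` of torsion classes:
the unique brick in `U^⊥ ∩ T`. -/
def IsBrickLabel (T U : Set C) (S : C) : Prop := IsBrick C S ∧ S ∈ RPerp C U ∩ T

/-- The brick label of a Hasse arrow `F → G` of torsion-free classes:
the unique brick in `^⊥G ∩ F`. -/
def IsBrickLabelTorf (F G : Set C) (S : C) : Prop := IsBrick C S ∧ S ∈ LPerp C G ∩ F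

/-- The left wide subcategory of a torsion class. -/
def WL (T : Set C) : Set C :=
  {X | X ∈ T ∧ ∀ ⦃Y : C⦄ (g : Y ⟶ X), Y ∈ T → kernel g ∈ T}

/-- The right wide subcategory of a torsion-free class. -/
def WR (F : Set C) : Set C :=
  {X | X ∈ F ∧ ∀ ⦃Y : C⦄ (f : X ⟶ Y), Y ∈ F → cokernel f ∈ F}

/-- A Serre subcategory of the abelian category given by a wide subcategory `W`:
closed under extensions, subobjects and quotients within `W`. -/
structure IsSerreIn (W S : Set C) : Prop where
  subset : S ⊆ W
  zero_mem : ∀ Z : C, IsZero Z → Z ∈ S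
  sub_mem : ∀ ⦃A X : C⦄ (f : A ⟶ X), Mono f → A ∈ W → X ∈ S → A ∈ S
  quot_mem : ∀ ⦃X B : C⦄ (f : X ⟶ B), Epi f → B ∈ W → X ∈ S → B ∈ S
  ext_mem : ∀ E : ShortComplex C, E.ShortExact → E.X₂ ∈ W →
    E.X₁ ∈ S → E.X₃ ∈ S → E.X₂ ∈ S

/-- A torsion class of the abelian category given by a wide subcategory `W`:
a subclass of `W` containing the zero objects and closed under quotients in `W`
and extensions. -/
structure IsTorsionClassIn (W X : Set C) : Prop where
  subset : X ⊆ W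
  zero_mem : ∀ Z : C, IsZero Z → Z ∈ X
  quot_mem : ∀ ⦃A B : C⦄ (f : A ⟶ B), Epi f → A ∈ X → B ∈ W → B ∈ X
  ext_mem : ∀ E : ShortComplex C, E.ShortExact → E.X₁ ∈ X → E.X₃ ∈ X → E.X₂ ∈ X

/-!
For `X ∈ T` take a maximal subobject `M` of `X` lying in `U` (it exists since `X` is
Noetherian). If `f : B ⟶ X / M` with `B ∈ U`, the pullback of `X ⟶ X / M` along `f` is an
extension of `B` by `M`, so it lies in `U`, and so does its image in `X`; this image contains
`M`, hence equals `M` by maximality, which forces `f = 0`. Thus `X / M ∈ U^⊥ ∩ T`. Two such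
subobjects `A, A'` coincide because each map `A ⟶ X ⟶ X / A'` vanishes.
-/

variable {C}

lemma exists_iso_of_cokernel_mem_rperp {U : Set C} {X A A' : C} (i : A ⟶ X) (i' : A' ⟶ X)
    [Mono i] [Mono i'] (hA : A ∈ U) (hA' : A' ∈ U) (hc : cokernel i ∈ RPerp C U)
    (hc' : cokernel i' ∈ RPerp C U) : ∃ e : A ≅ A', e.hom ≫ i' = i := by
  have h : i ≫ cokernel.π i' = 0 := hc' A hA _
  have h' : i' ≫ cokernel.π i = 0 := hc A' hA' _
  refine ⟨⟨Abelian.monoLift i' i h, Abelian.monoLift i i' h', ?_, ?_⟩,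
    Abelian.monoLift_comp i' i h⟩
  · simp [← cancel_mono i]
  · simp [← cancel_mono i']

lemma mem_extStar_of_mono {U W : Set C} {X A : C} (i : A ⟶ X) [Mono i] (hA : A ∈ U)
    (hc : cokernel i ∈ W) : X ∈ ExtStar C U W :=
  ⟨ShortComplex.mk i (cokernel.π i) (cokernel.condition i),
    { exact := ShortComplex.exact_of_g_is_cokernel _ (cokernelIsCokernel i) }, hA, hc,
    ⟨Iso.refl X⟩⟩

namespace IsTorsionClass

variable {U : Set C}

lemma mem_of_iso (hU : IsTorsionClass C U) {X Y : C} (e : X ≅ Y) (hX : X ∈ U) : Y ∈ U :=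
  hU.quot_mem e.hom inferInstance hX

lemma mem_of_epi_of_kernel_mem (hU : IsTorsionClass C U) {P B : C} (g : P ⟶ B) [Epi g]
    (hK : kernel g ∈ U) (hB : B ∈ U) : P ∈ U :=
  hU.ext_mem (ShortComplex.mk (kernel.ι g) g (kernel.condition g))
    { exact := ShortComplex.exact_of_f_is_kernel _ (kernelIsKernel g) } hK hB

lemma pullback_cokernel_mem (hU : IsTorsionClass C U) {M X B : C} (m : M ⟶ X)
    (f : B ⟶ cokernel m) (hM : M ∈ U) (hB : B ∈ U) : pullback (cokernel.π m) f ∈ U := by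
  have sq := (IsPullback.of_hasPullback (cokernel.π m) f).flip
  have := isIso_kernel_map_of_isPullback sq
  have hK : kernel (cokernel.π m) ∈ U :=
    hU.quot_mem (Abelian.factorThruImage m) inferInstance hM
  exact hU.mem_of_epi_of_kernel_mem (pullback.snd _ _)
    (hU.mem_of_iso (asIso (kernel.map _ _ _ _ sq.w)).symm hK) hB

lemma cokernel_mem_rperp_of_maximal (hU : IsTorsionClass C U) {X : C} {M : Subobject X}
    (hM : Maximal (fun N : Subobject X => (N : C) ∈ U) M) : cokernel M.arrow ∈ RPerp C U := by
  intro B hB f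
  set fst := pullback.fst (cokernel.π M.arrow) f
  have hImage : (imageSubobject fst : C) ∈ U :=
    hU.quot_mem (factorThruImageSubobject fst) inferInstance
      (hU.pullback_cokernel_mem M.arrow f hM.prop hB)
  have hle : M ≤ imageSubobject fst :=
    Subobject.le_of_comm (pullback.lift M.arrow 0 (by simp) ≫ factorThruImageSubobject fst)
      (by rw [Category.assoc, imageSubobject_arrow_comp, pullback.lift_fst])
  have hfst : fst ≫ cokernel.π M.arrow = 0 := by
    rw [← imageSubobject_arrow_comp fst, ← Subobject.ofLE_arrow (hM.le_of_ge hImage hle)]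
    simp only [Category.assoc, cokernel.condition, comp_zero]
  rw [← cancel_epi (pullback.snd (cokernel.π M.arrow) f), ← pullback.condition, hfst,
    comp_zero]

lemma exists_subobject_mem_cokernel_mem_rperp (hU : IsTorsionClass C U) (X : C)
    [IsNoetherianObject X] :
    ∃ M : Subobject X, (M : C) ∈ U ∧ cokernel M.arrow ∈ RPerp C U := by
  obtain ⟨M, hM⟩ := exists_maximal_of_wellFoundedGT (fun N : Subobject X => (N : C) ∈ U)
    ⟨⊥, hU.zero_mem _ (IsZero.of_iso (isZero_zero C) Subobject.botCoeIsoZero)⟩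
  exact ⟨M, hM.prop, hU.cokernel_mem_rperp_of_maximal hM⟩

lemma extStar_subset (hU : IsTorsionClass C U) {V W : Set C} (hV : V ⊆ U) (hW : W ⊆ U) :
    ExtStar C V W ⊆ U := by
  rintro X ⟨E, hE, h₁, h₃, ⟨e⟩⟩
  exact hU.mem_of_iso e (hU.ext_mem E hE (hV h₁) (hW h₃))

end IsTorsionClass

theorem stmt_0_general [Noetherian C]
    (U T : Set C) (hU : IsTorsionClass C U) (hT : IsTorsionClass C T) (hUT : U ⊆ T)
    (W : Set C) (hW : W = RPerp C U ∩ T) :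
    (∀ X ∈ T, ∃ (A : C) (i : A ⟶ X), Mono i ∧ A ∈ U ∧ cokernel i ∈ W) ∧
    (∀ X ∈ T, ∀ (A A' : C) (i : A ⟶ X) (i' : A' ⟶ X), Mono i → Mono i' →
      A ∈ U → A' ∈ U → cokernel i ∈ W → cokernel i' ∈ W →
      ∃ e : A ≅ A', e.hom ≫ i' = i) ∧
    T = ExtStar C U W := by
  subst hW
  have hExists : ∀ X ∈ T,
      ∃ (A : C) (i : A ⟶ X), Mono i ∧ A ∈ U ∧ cokernel i ∈ RPerp C U ∩ T := by
    intro X hX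
    obtain ⟨M, hMU, hperp⟩ := hU.exists_subobject_mem_cokernel_mem_rperp X
    exact ⟨M, M.arrow, inferInstance, hMU, hperp, hT.quot_mem (cokernel.π _) inferInstance hX⟩
  refine ⟨hExists, fun X _ A A' i i' _ _ hA hA' hc hc' =>
    exists_iso_of_cokernel_mem_rperp i i' hA hA' hc.1 hc'.1, ?_⟩
  refine subset_antisymm (fun X hX => ?_) (hT.extStar_subset hUT Set.inter_subset_right)
  obtain ⟨A, i, _, hA, hc⟩ := hExists X hX
  exact mem_extStar_of_mono i hA hc

/-- Lemma: for torsion classes `U ⊆ T` and `W = U^⊥ ∩ T`, every `T`-object is an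
extension of a `W`-object by a `U`-object, uniquely up to isomorphism; thus `T = U * W`. -/
theorem stmt_0 [Noetherian C] [Artinian C]
    (U T : Set C) (hU : IsTorsionClass C U) (hT : IsTorsionClass C T) (hUT : U ⊆ T)
    (W : Set C) (hW : W = RPerp C U ∩ T) :
    (∀ X ∈ T, ∃ (A : C) (i : A ⟶ X), Mono i ∧ A ∈ U ∧ cokernel i ∈ W) ∧
    (∀ X ∈ T, ∀ (A A' : C) (i : A ⟶ X) (i' : A' ⟶ X), Mono i → Mono i' →
      A ∈ U → A' ∈ U → cokernel i ∈ W → cokernel i' ∈ W →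
      ∃ e : A ≅ A', e.hom ≫ i' = i) ∧
    T = ExtStar C U W :=
  stmt_0_general U T hU hT hUT W hW
end

section
/- Let 𝒜 be an abelian length category and 𝒳 ⊆ 𝒜 a full subcategory. Then the smallest torsion class containing 𝒳 equals Filt(Fac 𝒳), the closure of 𝒳 under quotients followed by closure under finite filtrations. -/
open CategoryTheory CategoryTheory.Limits

universe v u

attribute [local instance] CategoryTheory.Abelian.hasFiniteBiproducts

variable (C : Type u) [Category.{v} C] [Abelian C]

/-!
`Filt (Fac X)` contains `X`, and every torsion class containing `X` contains it, because a
torsion class is closed under finite direct sums, quotients and extensions. Conversely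
`Filt (Fac X)` is itself a torsion class. For extensions `0 → A → B → Z → 0`, induct on a
filtration of `Z`: the preimage in `B` of its first step is an extension of `A` by that step.
For quotients `A ↠ B`, induct on a filtration of `A`: the image in `B` of its first step is a
quotient of that step, and the cokernel is a quotient of the top factor, so it lies in `Fac X`.
-/

section KernelSequences

variable {C}

theorem kernel_shortExact {A B : C} (f : A ⟶ B) [Epi f] :
    (ShortComplex.mk (kernel.ι f) f (kernel.condition f)).ShortExact :=
  .mk' (ShortComplex.exact_of_f_is_kernel _ (kernelIsKernel f)) inferInstance inferInstance

/-- The connecting map of `kernelCokernelCompSequence f g` lands in `coker f = 0`. -/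
theorem shortExact_kernel_comp_of_epi {X Y Z : C} (f : X ⟶ Y) [Epi f] (g : Y ⟶ Z) :
    (ShortComplex.mk (kernel.map f (f ≫ g) (𝟙 _) g (by simp))
      (kernel.map (f ≫ g) g f (𝟙 _) (by simp)) (by ext; simp)).ShortExact := by
  have hS := kernelCokernelCompSequence_exact f g
  have hδ : kernelCokernelCompSequence.δ f g = 0 :=
    (isZero_cokernel_of_epi f).eq_of_tgt _ _
  refine ShortComplex.ShortExact.mk' (hS.exact 0) ?_ ?_
  · dsimp
    infer_instance
  · exact (ShortComplex.exact_iff_epi _ hδ).1 (hS.exact 1)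

end KernelSequences

namespace IsTorsionClass

open ZeroObject

variable {C} {T : Set C}

theorem mem_of_iso_s3 (hT : IsTorsionClass C T) {A B : C} (e : A ≅ B) (hA : A ∈ T) : B ∈ T :=
  hT.quot_mem e.hom inferInstance hA

theorem isClosedUnderFiniteProducts (hT : IsTorsionClass C T) :
    ObjectProperty.IsClosedUnderFiniteProducts (· ∈ T) := by
  let P : ObjectProperty C := (· ∈ T)
  have : P.IsClosedUnderIsomorphisms := ⟨hT.mem_of_iso_s3⟩
  have : P.ContainsZero := ⟨⟨0, isZero_zero C, hT.zero_mem _ (isZero_zero C)⟩⟩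
  have : P.IsClosedUnderBinaryProducts := ⟨by
    rintro X ⟨p⟩
    refine hT.mem_of_iso_s3 ?_ (hT.ext_mem _
      (ShortComplex.Splitting.ofHasBinaryBiproduct _ _).shortExact
      (p.prop_diag_obj ⟨.left⟩) (p.prop_diag_obj ⟨.right⟩))
    exact IsLimit.conePointUniqueUpToIso (BinaryBiproduct.isLimit _ _)
      ((IsLimit.postcomposeHomEquiv (diagramIsoPair p.diag) _).2 p.isLimit)⟩
  exact .mk'

theorem biproduct_mem (hT : IsTorsionClass C T) {J : Type*} [Finite J] (c : J → C)
    (hc : ∀ j, c j ∈ T) : (⨁ c) ∈ T :=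
  have := hT.isClosedUnderFiniteProducts
  ObjectProperty.prop_of_isLimit_fan (· ∈ T) (biproduct.isLimit c) hc

theorem addClosure_subset (hT : IsTorsionClass C T) {S : Set C} (hS : S ⊆ T) :
    AddClosure C S ⊆ T := by
  rintro Y ⟨n, c, hc, f, hf⟩
  exact hT.quot_mem f inferInstance (hT.biproduct_mem c fun i => hS (hc i))

theorem fac_subset (hT : IsTorsionClass C T) {S : Set C} (hS : S ⊆ T) : Fac C S ⊆ T := by
  rintro Y ⟨A, hA, f, hf⟩
  exact hT.quot_mem f hf (hT.addClosure_subset hS hA)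

theorem filt_subset (hT : IsTorsionClass C T) {S : Set C} (hS : S ⊆ T) : Filt C S ⊆ T := by
  intro Y hY
  induction hY with
  | of_isZero Z hZ => exact hT.zero_mem Z hZ
  | ext E hE _ h₃ ih => exact hT.ext_mem E hE ih (hT.addClosure_subset hS h₃)
  | of_iso Y Z e _ ih => exact hT.mem_of_iso_s3 e ih

end IsTorsionClass

section Fac

variable {C} {S : Set C}

theorem mem_addClosure_of_mem {X : C} (hX : X ∈ S) : X ∈ AddClosure C S :=
  ⟨1, fun _ => X, fun _ => hX, biproduct.π _ 0,
    ⟨⟨{ section_ := biproduct.ι (fun _ : Fin 1 => X) 0, id := biproduct.ι_π_self _ 0 }⟩⟩⟩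

theorem mem_fac_iff {Y : C} :
    Y ∈ Fac C S ↔ ∃ (n : ℕ) (c : Fin n → C), (∀ i, c i ∈ S) ∧ ∃ f : (⨁ c) ⟶ Y, Epi f := by
  constructor
  · rintro ⟨A, ⟨n, c, hc, p, hp⟩, f, hf⟩
    exact ⟨n, c, hc, p ≫ f, epi_comp p f⟩
  · rintro ⟨n, c, hc, f, hf⟩
    exact ⟨⨁ c, ⟨n, c, hc, 𝟙 _, inferInstance⟩, f, hf⟩

theorem mem_fac_of_epi {A B : C} (hA : A ∈ Fac C S) (f : A ⟶ B) [Epi f] : B ∈ Fac C S := by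
  obtain ⟨A', hA', p, hp⟩ := hA
  exact ⟨A', hA', p ≫ f, epi_comp p f⟩

theorem biproduct_mem_fac {n : ℕ} (c : Fin n → C) (hc : ∀ i, c i ∈ Fac C S) :
    (⨁ c) ∈ Fac C S := by
  simp only [mem_fac_iff] at hc
  choose m d hd p hp using hc
  let σ := (i : Fin n) × Fin (m i)
  let e : Fin (Fintype.card σ) ≃ σ := (Fintype.equivFin σ).symm
  let reindex : (⨁ fun j => d (e j).1 (e j).2) ≅ ⨁ fun i => ⨁ d i :=
    biproduct.whiskerEquiv (g := fun q : σ => d q.1 q.2) e (fun _ => Iso.refl _) ≪≫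
      (biproductBiproductIso _ d).symm
  exact mem_fac_iff.2 ⟨_, _, fun j => hd _ _, reindex.hom ≫ biproduct.map p, inferInstance⟩

theorem addClosure_fac_subset : AddClosure C (Fac C S) ⊆ Fac C S := by
  rintro Y ⟨n, c, hc, f, hf⟩
  exact mem_fac_of_epi (biproduct_mem_fac c hc) f

end Fac

namespace FiltMem

variable {C} {S : Set C}

theorem of_mem_addClosure {X : C} (hX : X ∈ AddClosure C S) : FiltMem C S X :=
  .ext _ (kernel_shortExact (𝟙 X)) (.of_isZero _ (isZero_kernel_of_mono _)) hX

theorem of_epi_of_kernel {Z : C} (hZ : FiltMem C S Z) :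
    ∀ {B : C} (p : B ⟶ Z) [Epi p], FiltMem C S (kernel p) → FiltMem C S B := by
  induction hZ with
  | of_isZero Z hZ =>
    intro B p _ hK
    obtain rfl : p = 0 := hZ.eq_of_tgt _ _
    exact .of_iso _ _ (asIso (kernel.ι 0)) hK
  | ext E hE _ h₃ ih =>
    intro B p _ hK
    have := hE.epi_g
    have hpg := shortExact_kernel_comp_of_epi p E.g
    have := hpg.epi_g
    let eX₁ : kernel E.g ≅ E.X₁ :=
      IsLimit.conePointUniqueUpToIso (kernelIsKernel E.g) hE.fIsKernel
    let eK : kernel (kernel.map (p ≫ E.g) E.g p (𝟙 _) (by simp) ≫ eX₁.hom) ≅ kernel p :=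
      kernelCompMono _ _ ≪≫ IsLimit.conePointUniqueUpToIso (kernelIsKernel _) hpg.fIsKernel
    exact .ext _ (kernel_shortExact (p ≫ E.g)) (ih _ (.of_iso _ _ eK.symm hK)) h₃
  | of_iso Y Z e _ ih =>
    intro B p _ hK
    exact ih (p ≫ e.inv) (.of_iso _ _ (kernelCompMono p e.inv).symm hK)

theorem X₂_of_shortExact {E : ShortComplex C} (hE : E.ShortExact) (h₁ : FiltMem C S E.X₁)
    (h₃ : FiltMem C S E.X₃) : FiltMem C S E.X₂ :=
  have := hE.epi_g
  h₃.of_epi_of_kernel E.g <|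
    .of_iso _ _ (IsLimit.conePointUniqueUpToIso (kernelIsKernel E.g) hE.fIsKernel).symm h₁

theorem of_epi
    (hS : ∀ ⦃A B : C⦄ (f : A ⟶ B), Epi f → A ∈ AddClosure C S → B ∈ AddClosure C S)
    {A : C} (hA : FiltMem C S A) : ∀ {B : C} (f : A ⟶ B) [Epi f], FiltMem C S B := by
  induction hA with
  | of_isZero A hA =>
    intro B f _
    exact .of_isZero B (hA.of_epi f)
  | ext E hE _ h₃ ih =>
    intro B f _
    let i := E.f ≫ f
    obtain ⟨d, hd⟩ := CokernelCofork.IsColimit.desc' hE.gIsCokernel (f ≫ cokernel.π i)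
      (by rw [← Category.assoc]; exact cokernel.condition i)
    have : Epi d := by
      have : Epi (E.g ≫ d) := hd ▸ epi_comp _ _
      exact epi_of_epi E.g d
    exact .ext _ (kernel_shortExact (cokernel.π i)) (ih (Abelian.factorThruImage i))
      (hS d this h₃)
  | of_iso Y Z e _ ih =>
    intro B f _
    exact ih (e.hom ≫ f)

end FiltMem

theorem isTorsionClass_filt_fac (X : Set C) : IsTorsionClass C (Filt C (Fac C X)) where
  zero_mem Z hZ := .of_isZero Z hZ
  quot_mem _ _ f _ hA := FiltMem.of_epi
    (fun _ _ g _ hA => mem_addClosure_of_mem (mem_fac_of_epi (addClosure_fac_subset hA) g))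
    hA f
  ext_mem _ hE h₁ h₃ := FiltMem.X₂_of_shortExact hE h₁ h₃

theorem subset_filt_fac (X : Set C) : X ⊆ Filt C (Fac C X) := fun _ hx =>
  .of_mem_addClosure (mem_addClosure_of_mem ⟨_, mem_addClosure_of_mem hx, 𝟙 _, inferInstance⟩)

theorem stmt_3 (X : Set C) :
    torsClosure C X = Filt C (Fac C X) := by
  apply Set.Subset.antisymm
  · exact Set.sInter_subset_of_mem ⟨isTorsionClass_filt_fac C X, subset_filt_fac C X⟩
  · exact Set.subset_sInter fun T ⟨hT, hXT⟩ => hT.filt_subset (hT.fac_subset hXT)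
end

section
/- Let 𝒜 be an abelian length category and let 𝒯 ⊋ 𝒰 be adjacent torsion classes in 𝒜 (i.e., no torsion class lies strictly between them), with brick label S, so that 𝒰^⊥ ∩ 𝒯 = Filt S. Then 𝒰 = 𝒯 ∩ ^⊥S and 𝒯 = T(𝒰 ∪ {S}). -/
open CategoryTheory CategoryTheory.Limits

universe v u

attribute [local instance] CategoryTheory.Abelian.hasFiniteBiproducts

variable (C : Type u) [Category.{v} C] [Abelian C]

open ZeroObject in
lemma self_mem_filt_aux (S : C) : S ∈ Filt C {S} := by
  have hadd : S ∈ AddClosure C ({S} : Set C) := by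
    exact ⟨1, fun _ => S, fun _ => rfl, biproduct.π (fun _ : Fin 1 => S) 0,
      ⟨⟨⟨biproduct.ι (fun _ : Fin 1 => S) 0, biproduct.ι_π_self _ _⟩⟩⟩⟩
  let E : ShortComplex C := ShortComplex.mk (0 : (0 : C) ⟶ S) (𝟙 S) (by simp)
  haveI hm : Mono E.f := ⟨fun g h _ => (isZero_zero C).eq_of_tgt g h⟩
  haveI he : Epi E.g := by dsimp [E]; infer_instance
  have hex : E.Exact := (E.exact_iff_mono rfl).2 (by dsimp [E]; infer_instance)
  have hSE : E.ShortExact := ⟨hex⟩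
  exact FiltMem.ext E hSE (FiltMem.of_isZero _ (isZero_zero C)) hadd

lemma isTorsionClass_inter_lperp_aux (T : Set C) (hT : IsTorsionClass C T) (S : C) :
    IsTorsionClass C (T ∩ LPerp C {S}) where
  zero_mem Z hZ := ⟨hT.zero_mem Z hZ, fun A _ f => hZ.eq_of_src f 0⟩
  quot_mem A B f hf hA := by
    refine ⟨hT.quot_mem f hf hA.1, fun A' hA' g => ?_⟩
    have h0 : f ≫ g = 0 := hA.2 A' hA' (f ≫ g)
    exact (cancel_epi f).1 (by rw [h0, comp_zero])
  ext_mem E hE h1 h3 := by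
    refine ⟨hT.ext_mem E hE h1.1 h3.1, fun A hA g => ?_⟩
    haveI := hE.epi_g
    obtain ⟨ψ, hψ⟩ := CokernelCofork.IsColimit.desc' hE.exact.gIsCokernel g
      (h1.2 A hA (E.f ≫ g))
    rw [← hψ, h3.2 A hA ψ, comp_zero]

lemma isTorsionClass_torsClosure_aux (X : Set C) : IsTorsionClass C (torsClosure C X) where
  zero_mem Z hZ := Set.mem_sInter.2 fun _ hT' => hT'.1.zero_mem Z hZ
  quot_mem A B f hf hA := Set.mem_sInter.2 fun T' hT' =>
    hT'.1.quot_mem f hf (Set.mem_sInter.1 hA T' hT')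
  ext_mem E hE h1 h3 := Set.mem_sInter.2 fun T' hT' =>
    hT'.1.ext_mem E hE (Set.mem_sInter.1 h1 T' hT') (Set.mem_sInter.1 h3 T' hT')

lemma subset_torsClosure_aux (X : Set C) : X ⊆ torsClosure C X :=
  fun _ hx => Set.mem_sInter.2 fun _ hT' => hT'.2 hx

lemma torsClosure_subset_aux (X T : Set C) (hT : IsTorsionClass C T) (hXT : X ⊆ T) :
    torsClosure C X ⊆ T :=
  fun _ hx => Set.mem_sInter.1 hx T ⟨hT, hXT⟩

/-- For adjacent torsion classes `U ⊊ T` with brick label `S` (so `U^⊥ ∩ T = Filt S`),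
one has `U = T ∩ ^⊥S` and `T = T(U ∪ {S})`. -/
theorem stmt_5 [Noetherian C] [Artinian C] (T U : Set C) (h : IsHasseArrow C T U)
    (S : C) (hS : IsBrick C S) (hFilt : RPerp C U ∩ T = Filt C {S}) :
    U = T ∩ LPerp C {S} ∧ T = torsClosure C (U ∪ {S}) := by
  obtain ⟨hT, hU, hUT, hadj⟩ := h
  have hSmem : S ∈ RPerp C U ∩ T := hFilt ▸ self_mem_filt_aux C S
  have hSnz : ¬ IsZero S := hS.1
  constructor
  · -- U = T ∩ ^⊥S
    have hV : IsTorsionClass C (T ∩ LPerp C {S}) := isTorsionClass_inter_lperp_aux C T hT S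
    have hUV : U ⊆ T ∩ LPerp C {S} := fun x hx =>
      ⟨hUT.1 hx, fun A hA f => by
        rw [Set.mem_singleton_iff] at hA; subst hA; exact hSmem.1 x hx f⟩
    rcases hadj _ hV hUV Set.inter_subset_left with h1 | h1
    · exact h1.symm
    · exfalso
      have hSV : S ∈ T ∩ LPerp C {S} := by rw [h1]; exact hSmem.2
      exact hSnz ((IsZero.iff_id_eq_zero S).2 (hSV.2 S rfl (𝟙 S)))
  · -- T = torsClosure (U ∪ {S})
    have hW : IsTorsionClass C (torsClosure C (U ∪ {S})) :=
      isTorsionClass_torsClosure_aux C (U ∪ {S})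
    have hUW : U ⊆ torsClosure C (U ∪ {S}) := fun x hx =>
      subset_torsClosure_aux C (U ∪ {S}) (Or.inl hx)
    have hWT : torsClosure C (U ∪ {S}) ⊆ T := by
      refine torsClosure_subset_aux C _ T hT ?_
      rintro x (hx | hx)
      · exact hUT.1 hx
      · rw [Set.mem_singleton_iff] at hx; subst hx; exact hSmem.2
    rcases hadj _ hW hUW hWT with h2 | h2
    · exfalso
      have hSU : S ∈ U := h2 ▸ subset_torsClosure_aux C (U ∪ {S}) (Or.inr rfl)
      exact hSnz ((IsZero.iff_id_eq_zero S).2 (hSmem.1 S hSU (𝟙 S)))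
    · exact h2.symm
end

section
/- Let 𝒜 be an abelian length category. The Hasse arrows in tors 𝒜 ending at the zero torsion class are exactly Filt S → 0 for simple objects S of 𝒜, each labeled by S; and the Hasse arrows starting at 𝒜 are exactly 𝒜 → ^⊥S for simple objects S, each labeled by S. Moreover, for simples S, S', one has Filt S ⊆ ^⊥S' if and only if S ≇ S'. -/
/-!
In a length category every nonzero object has a simple quotient, and a torsion class containing
all simple objects is everything (induct on length). For `S` simple, `Filt S` is the smallest
torsion class containing `S`: it is closed under quotients because a quotient of an extension is
an extension of quotients, and the quotients of `S` are `0` and `S`. For `S' ≇ S` the torsion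
class `^⊥S'` contains `S`, hence `Filt S`, so the simple objects of `Filt S` are the copies of `S`.

So a nonzero torsion class `T` contains `Filt S` for any simple quotient `S` of any nonzero
object of `T`, and a nonzero torsion class inside `Filt S` contains `S`. Dually, a torsion class
`T ≠ 𝒜` misses some simple `S`, and `T ⊆ ^⊥S` since every nonzero map to `S` is epi; a torsion
class strictly containing `^⊥S` contains `S` and every simple `S' ≇ S`, so it is `𝒜`.
-/

open CategoryTheory CategoryTheory.Limits

universe v u

attribute [local instance] CategoryTheory.Abelian.hasFiniteBiproducts

variable (C : Type u) [Category.{v} C] [Abelian C]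

section
variable {C}

open ObjectProperty Opposite

lemma shortExact_kernel {X Y : C} (g : X ⟶ Y) [Epi g] :
    (ShortComplex.mk (kernel.ι g) g (kernel.condition g)).ShortExact :=
  .mk' (ShortComplex.exact_of_f_is_kernel _ (kernelIsKernel g)) inferInstance inferInstance

lemma shortExact_cokernel {X Y : C} (f : X ⟶ Y) [Mono f] :
    (ShortComplex.mk f (cokernel.π f) (cokernel.condition f)).ShortExact :=
  .mk' (ShortComplex.exact_of_g_is_cokernel _ (cokernelIsCokernel f)) inferInstance inferInstance

lemma shortExact_kernel_comp {X Y Z : C} (f : X ⟶ Y) (g : Y ⟶ Z) [Epi f] :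
    (ShortComplex.mk (kernel.map f (f ≫ g) (𝟙 _) g (by simp))
      (kernel.map (f ≫ g) g f (𝟙 _) (by simp)) (by ext; simp)).ShortExact := by
  have hS := kernelCokernelCompSequence_exact f g
  refine .mk' (hS.exact 0) inferInstance ?_
  -- the connecting map `ker g ⟶ coker f` vanishes since `f` is epi
  exact (hS.exact 1).epi_f (IsZero.eq_of_tgt (isZero_cokernel_of_epi f) _ _)

noncomputable def CategoryTheory.ShortComplex.ShortExact.kernelIso {S : ShortComplex C}
    (hS : S.ShortExact) : kernel S.g ≅ S.X₁ :=
  have := hS.mono_f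
  IsLimit.conePointUniqueUpToIso (kernelIsKernel S.g) hS.exact.fIsKernel

lemma isTorsionClass_isZero : IsTorsionClass C {Z : C | IsZero Z} where
  zero_mem _ h := h
  quot_mem _ _ f _ h := IsZero.of_epi f h
  ext_mem _ hE h₁ h₃ := hE.exact.isZero_of_both_isZero h₁ h₃

lemma isTorsionClass_univ : IsTorsionClass C Set.univ :=
  ⟨fun _ _ ↦ trivial, fun _ _ _ _ _ ↦ trivial, fun _ _ _ _ ↦ trivial⟩

lemma isTorsionClass_lperp (X : Set C) : IsTorsionClass C (LPerp C X) where
  zero_mem _ hZ _ _ f := hZ.eq_of_src f 0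
  quot_mem _ _ f _ h A hA g := by rw [← cancel_epi f, h A hA (f ≫ g), comp_zero]
  ext_mem E hE h₁ h₃ A hA g := by
    have := hE.epi_g
    have hg : E.f ≫ g = 0 := h₁ A hA _
    rw [← hE.exact.g_desc g hg, h₃ A hA (hE.exact.desc g hg), comp_zero]

lemma IsTorsionClass.biproduct_mem_s7 {T : Set C} (hT : IsTorsionClass C T) {J : Type} [Finite J]
    (c : J → C) [HasBiproduct c] (hc : ∀ j, c j ∈ T) : (⨁ c) ∈ T := by
  let P : ObjectProperty C := (· ∈ T)
  have : P.ContainsZero := ⟨⟨_, isZero_zero C, hT.zero_mem _ (isZero_zero C)⟩⟩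
  have : P.IsClosedUnderIsomorphisms := ⟨fun e h ↦ hT.quot_mem e.hom inferInstance h⟩
  have : P.IsClosedUnderExtensions := ⟨fun hS h₁ h₃ ↦ hT.ext_mem _ hS h₁ h₃⟩
  have : P.IsClosedUnderBinaryProducts := IsClosedUnderLimitsOfShape.mk' (by
    rintro _ ⟨F, hF⟩
    exact P.prop_of_iso ((limit.isoLimitCone ⟨_, BinaryBiproduct.isLimit _ _⟩).symm ≪≫
      (HasLimit.isoOfNatIso (diagramIsoPair F)).symm) (P.prop_biprod (hF _) (hF _)))
  have : P.IsClosedUnderFiniteProducts := .mk'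
  exact P.prop_of_iso (biproduct.isoProduct c).symm (P.prop_product hc)

lemma IsTorsionClass.addClosure_subset_s7 {T : Set C} (hT : IsTorsionClass C T) {S : Set C}
    (hS : S ⊆ T) : AddClosure C S ⊆ T := by
  rintro X ⟨n, c, hc, f, hf⟩
  exact hT.quot_mem f hf.epi (hT.biproduct_mem_s7 c fun i ↦ hS (hc i))

lemma IsTorsionClass.filt_subset_s7 {T : Set C} (hT : IsTorsionClass C T) {S : Set C}
    (hS : S ⊆ T) : Filt C S ⊆ T := by
  intro X hX
  induction hX with
  | of_isZero X hX => exact hT.zero_mem X hX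
  | of_iso X Y e _ ih => exact hT.quot_mem e.hom inferInstance ih
  | ext E hE _ h₃ ih => exact hT.ext_mem E hE ih (hT.addClosure_subset_s7 hS h₃)

def quotientsIn (T : Set C) : Set C := {X | ∀ ⦃Y : C⦄ (f : X ⟶ Y), Epi f → Y ∈ T}

/-- A quotient `Y` of an extension of `X₃` by `X₁` is an extension of a quotient of `X₃`
by the image of `X₁` in `Y`. -/
lemma isTorsionClass_quotientsIn {T : Set C} (hT₀ : ∀ Z : C, IsZero Z → Z ∈ T)
    (hText : ∀ E : ShortComplex C, E.ShortExact → E.X₁ ∈ T → E.X₃ ∈ T → E.X₂ ∈ T) :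
    IsTorsionClass C (quotientsIn T) where
  zero_mem Z hZ Y f _ := hT₀ Y (IsZero.of_epi f hZ)
  quot_mem A B f _ hA Y g _ := hA (f ≫ g) (epi_comp f g)
  ext_mem E hE h₁ h₃ Y f _ := by
    have := hE.epi_g
    let i := image.ι (E.f ≫ f)
    have hzero : E.f ≫ f ≫ cokernel.π i = 0 := by
      simpa [i] using (image.fac_assoc (E.f ≫ f) (cokernel.π i)).symm
    let d := hE.exact.desc (f ≫ cokernel.π i) hzero
    have : Epi d := epi_of_epi_fac (hE.exact.g_desc _ hzero)
    exact hText _ (shortExact_cokernel i) (h₁ (factorThruImage (E.f ≫ f)) inferInstance)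
      (h₃ d inferInstance)

lemma subset_addClosure (S : Set C) : S ⊆ AddClosure C S := fun X hX ↦
  ⟨1, fun _ ↦ X, fun _ ↦ hX, biproduct.π _ 0, ⟨⟨⟨biproduct.ι (fun _ : Fin 1 ↦ X) 0, by simp⟩⟩⟩⟩

lemma FiltMem.of_mem_addClosure_s7 {S : Set C} {X : C} (hX : X ∈ AddClosure C S) :
    FiltMem C S X :=
  .ext _ (shortExact_kernel (𝟙 X)) (.of_isZero _ (isZero_kernel_of_mono _)) hX

lemma subset_filt (S : Set C) : S ⊆ Filt C S := fun _ hX ↦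
  FiltMem.of_mem_addClosure_s7 (subset_addClosure S hX)

lemma FiltMem.of_shortExact {S : Set C} {B : C} (hB : FiltMem C S B) :
    ∀ {E : ShortComplex C}, E.ShortExact → FiltMem C S E.X₁ → (E.X₃ ≅ B) →
      FiltMem C S E.X₂ := by
  induction hB with
  | of_isZero B hB =>
    intro E hE h₁ e
    have := hE.mono_f
    have : Epi E.f := (E.exact_iff_epi ((hB.of_iso e).eq_of_tgt _ _)).mp hE.exact
    have := isIso_of_mono_of_epi E.f
    exact .of_iso _ _ (asIso E.f) h₁
  | of_iso B B' e' _ ih => exact fun hE h₁ e ↦ ih hE h₁ (e ≪≫ e'.symm)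
  | ext E' hE' _ h₃ ih =>
    -- With `p : E.X₂ ⟶ E'.X₂`, the kernel of `p ≫ E'.g` is an extension of `E'.X₁` by `E.X₁`.
    intro E hE h₁ e
    have := hE.epi_g
    have := hE'.epi_g
    let p := E.g ≫ e.hom
    have hker : FiltMem C S (kernel (p ≫ E'.g)) :=
      ih (shortExact_kernel_comp p E'.g)
        (.of_iso _ _ (kernelCompMono E.g e.hom ≪≫ hE.kernelIso).symm h₁) hE'.kernelIso
    exact (FiltMem.ext _ (shortExact_kernel (p ≫ E'.g)) hker h₃ :)

lemma mem_quotientsIn_filt_of_simple (S : C) [Simple S] : S ∈ quotientsIn (Filt C {S}) := by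
  intro Y f _
  by_cases hf : f = 0
  · exact FiltMem.of_isZero _ (IsZero.of_epi_eq_zero f hf)
  · have := isIso_of_epi_of_nonzero hf
    exact FiltMem.of_iso _ _ (asIso f) (subset_filt _ rfl)

lemma isTorsionClass_filt (S : C) [Simple S] : IsTorsionClass C (Filt C {S}) where
  zero_mem := FiltMem.of_isZero
  quot_mem _ _ f hf hA := by
    have hQ := isTorsionClass_quotientsIn (T := Filt C {S}) FiltMem.of_isZero
      fun _ hE h₁ h₃ ↦ FiltMem.of_shortExact h₃ hE h₁ (Iso.refl _)
    exact hQ.filt_subset_s7 (by simpa using mem_quotientsIn_filt_of_simple S) hA f hf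
  ext_mem _ hE h₁ h₃ := FiltMem.of_shortExact h₃ hE h₁ (Iso.refl _)

lemma eq_zero_of_isEmpty_iso {S S' : C} [Simple S] [Simple S'] (h : IsEmpty (S ≅ S'))
    (f : S ⟶ S') : f = 0 := by
  by_contra hf
  have := isIso_of_hom_simple hf
  exact h.false (asIso f)

lemma isBrick_of_simple (S : C) [Simple S] : IsBrick C S :=
  ⟨Simple.not_isZero S, fun _ ↦ or_iff_not_imp_left.mpr isIso_of_hom_simple⟩

lemma notMem_lperp_self {S : C} (hS : ¬ IsZero S) : S ∉ LPerp C {S} :=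
  fun h ↦ hS ((IsZero.iff_id_eq_zero S).mpr (h S rfl (𝟙 S)))

lemma filt_subset_lperp {S S' : C} (h : ∀ f : S ⟶ S', f = 0) : Filt C {S} ⊆ LPerp C {S'} :=
  (isTorsionClass_lperp _).filt_subset_s7 (by simpa [LPerp] using h)

lemma filt_subset_lperp_iff (S S' : C) [Simple S] [Simple S'] :
    Filt C {S} ⊆ LPerp C {S'} ↔ IsEmpty (S ≅ S') := by
  refine ⟨fun h ↦ ⟨fun e ↦ ?_⟩, fun h ↦ filt_subset_lperp (eq_zero_of_isEmpty_iso h)⟩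
  exact notMem_lperp_self (Simple.not_isZero S') (isTorsionClass_lperp _ |>.quot_mem e.hom
    inferInstance (h (subset_filt _ rfl)))

lemma nonempty_iso_of_simple_mem_filt {S S₀ : C} [Simple S] [Simple S₀] (h : S₀ ∈ Filt C {S}) :
    Nonempty (S ≅ S₀) := by
  by_contra hno
  exact notMem_lperp_self (Simple.not_isZero S₀)
    ((filt_subset_lperp_iff S S₀).mpr (not_nonempty_iff.mp hno) h)

lemma IsTorsionClass.mem_of_notMem_lperp {T : Set C} (hT : IsTorsionClass C T) {S Y : C}
    [Simple S] (hY : Y ∈ T) (h : Y ∉ LPerp C {S}) : S ∈ T := by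
  by_contra hS
  refine h fun A hA f ↦ ?_
  obtain rfl := Set.mem_singleton_iff.mp hA
  by_contra hf
  exact hS (hT.quot_mem f (epi_of_nonzero_to_simple hf) hY)

lemma Simple.of_op {X : C} [Simple (op X)] : Simple X := by
  rw [simple_iff_subobject_isSimpleOrder] at *
  exact (Abelian.subobjectIsoSubobjectOp X).isSimpleOrder

lemma exists_simple_quotient {X : C} [IsNoetherianObject X] (hX : ¬ IsZero X) :
    ∃ (Y : C) (g : X ⟶ Y), Simple Y ∧ Epi g := by
  have : IsArtinianObject (op X) :=
    ⟨(Abelian.subobjectIsoSubobjectOp X).symm.dual.toOrderEmbedding.wellFoundedLT⟩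
  obtain ⟨Y, hY⟩ := exists_simple_subobject (X := op X) (fun h ↦ hX h.unop)
  exact ⟨unop (Y : Cᵒᵖ), Y.arrow.unop, Simple.of_op, inferInstance⟩

lemma IsTorsionClass.eq_univ_of_forall_simple_mem [Noetherian C] [Artinian C] {T : Set C}
    (hT : IsTorsionClass C T) (hs : ∀ S : C, Simple S → S ∈ T) : T = Set.univ := by
  refine Set.eq_univ_of_forall fun X ↦ ?_
  suffices h : ∀ A : Subobject X, (A : C) ∈ T from
    hT.quot_mem (⊤ : Subobject X).arrow inferInstance (h ⊤)
  intro A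
  induction A using WellFoundedLT.induction with
  | _ A ih =>
    by_cases hA : IsZero (A : C)
    · exact hT.zero_mem _ hA
    obtain ⟨S, g, hS, hg⟩ := exists_simple_quotient hA
    have hlt : Subobject.mk (kernel.ι g ≫ A.arrow) < A := by
      conv_rhs => rw [← Subobject.mk_arrow A]
      refine Subobject.mk_lt_mk_of_comm (kernel.ι g) rfl fun _ ↦ Simple.not_isZero S ?_
      exact IsZero.of_epi_eq_zero g (by rw [← cancel_epi (kernel.ι g), kernel.condition, comp_zero])
    have hker : kernel g ∈ T :=
      hT.quot_mem (Subobject.underlyingIso _).hom inferInstance (ih _ hlt)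
    exact hT.ext_mem _ (shortExact_kernel g) hker (hs S hS)

lemma isHasseArrow_filt_isZero [Noetherian C] (S : C) [Simple S] :
    IsHasseArrow C (Filt C {S}) {Z : C | IsZero Z} := by
  refine ⟨isTorsionClass_filt S, isTorsionClass_isZero,
    ⟨fun Z hZ ↦ .of_isZero Z hZ, fun h ↦ Simple.not_isZero S (h (subset_filt _ rfl))⟩, ?_⟩
  intro V hV hV₀ hVS
  by_cases hVz : V ⊆ {Z : C | IsZero Z}
  · exact .inl (hVz.antisymm hV₀)
  obtain ⟨X, hXV, hX⟩ := Set.not_subset.mp hVz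
  obtain ⟨S₀, g, hS₀, hg⟩ := exists_simple_quotient hX
  have hS₀V : S₀ ∈ V := hV.quot_mem g hg hXV
  obtain ⟨e⟩ := nonempty_iso_of_simple_mem_filt (hVS hS₀V)
  exact .inr (hVS.antisymm (hV.filt_subset_s7 (by simpa using hV.quot_mem e.inv inferInstance hS₀V)))

lemma exists_eq_filt_of_isHasseArrow_isZero [Noetherian C] {T : Set C}
    (h : IsHasseArrow C T {Z : C | IsZero Z}) : ∃ S : C, Simple S ∧ T = Filt C {S} := by
  obtain ⟨hT, -, hlt, hmin⟩ := h
  obtain ⟨X, hXT, hX⟩ := Set.not_subset.mp hlt.2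
  obtain ⟨S, g, hS, hg⟩ := exists_simple_quotient hX
  refine ⟨S, hS, ?_⟩
  have hST : Filt C {S} ⊆ T := hT.filt_subset_s7 (by simpa using hT.quot_mem g hg hXT)
  refine ((hmin _ (isTorsionClass_filt S) (fun Z hZ ↦ .of_isZero Z hZ) hST).resolve_left
    fun h ↦ ?_).symm
  exact Simple.not_isZero S (h.subset (subset_filt _ rfl))

lemma isHasseArrow_univ_lperp [Noetherian C] [Artinian C] (S : C) [Simple S] :
    IsHasseArrow C Set.univ (LPerp C {S}) := by
  refine ⟨isTorsionClass_univ, isTorsionClass_lperp _,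
    Set.ssubset_univ_iff.mpr fun h ↦ notMem_lperp_self (Simple.not_isZero S) (h ▸ trivial), ?_⟩
  intro V hV hSV _
  by_cases hVS : V ⊆ LPerp C {S}
  · exact .inl (hVS.antisymm hSV)
  obtain ⟨Y, hYV, hY⟩ := Set.not_subset.mp hVS
  have hS : S ∈ V := hV.mem_of_notMem_lperp hYV hY
  refine .inr (hV.eq_univ_of_forall_simple_mem fun S' _ ↦ ?_)
  by_cases hiso : Nonempty (S ≅ S')
  · exact hV.quot_mem hiso.some.hom inferInstance hS
  · exact hSV ((filt_subset_lperp_iff S' S).mpr ⟨fun e ↦ hiso ⟨e.symm⟩⟩ (subset_filt _ rfl))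

lemma exists_eq_lperp_of_isHasseArrow_univ [Noetherian C] [Artinian C] {U : Set C}
    (h : IsHasseArrow C Set.univ U) : ∃ S : C, Simple S ∧ U = LPerp C {S} := by
  obtain ⟨-, hU, hlt, hmax⟩ := h
  obtain ⟨S, hS, hSU⟩ : ∃ S : C, Simple S ∧ S ∉ U := by
    by_contra! h
    exact hlt.ne (hU.eq_univ_of_forall_simple_mem h)
  refine ⟨S, hS, ?_⟩
  have hUS : U ⊆ LPerp C {S} := fun Y hY ↦ by_contra fun h ↦ hSU (hU.mem_of_notMem_lperp hY h)
  refine ((hmax _ (isTorsionClass_lperp _) hUS (Set.subset_univ _)).resolve_right fun h ↦ ?_).symm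
  exact notMem_lperp_self (Simple.not_isZero S) (h.symm.subset trivial)

end

/-- The Hasse arrows of `tors 𝒜` ending at `0` are exactly `Filt S → 0` for simples `S`,
labeled by `S`; the arrows starting at `𝒜` are exactly `𝒜 → ^⊥S` for simples `S`, labeled
by `S`; and `Filt S ⊆ ^⊥S'` iff `S ≇ S'` for simples `S, S'`. -/
theorem stmt_7 [Noetherian C] [Artinian C] :
    (∀ T : Set C, IsHasseArrow C T {Z : C | IsZero Z} ↔
      ∃ S : C, Simple S ∧ T = Filt C {S}) ∧
    (∀ S : C, Simple S → IsBrickLabel C (Filt C {S}) {Z : C | IsZero Z} S) ∧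
    (∀ U : Set C, IsHasseArrow C Set.univ U ↔ ∃ S : C, Simple S ∧ U = LPerp C {S}) ∧
    (∀ S : C, Simple S → IsBrickLabel C Set.univ (LPerp C {S}) S) ∧
    (∀ S S' : C, Simple S → Simple S' →
      (Filt C {S} ⊆ LPerp C {S'} ↔ IsEmpty (S ≅ S'))) := by
  refine ⟨fun T ↦ ⟨exists_eq_filt_of_isHasseArrow_isZero, ?_⟩, fun S _ ↦ ?_,
    fun U ↦ ⟨exists_eq_lperp_of_isHasseArrow_univ, ?_⟩, fun S _ ↦ ?_,
    fun S S' _ _ ↦ filt_subset_lperp_iff S S'⟩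
  · rintro ⟨S, hS, rfl⟩
    exact isHasseArrow_filt_isZero S
  · exact ⟨isBrick_of_simple S, fun _ hZ f ↦ hZ.eq_of_src f 0, subset_filt _ rfl⟩
  · rintro ⟨S, hS, rfl⟩
    exact isHasseArrow_univ_lperp S
  · exact ⟨isBrick_of_simple S, fun _ hA f ↦ hA S rfl f, trivial⟩
end

section
/- Let 𝒜 be an abelian length category and 𝒯 a torsion class. If 𝒯₁ → 𝒯 and 𝒯₂ → 𝒯 are distinct Hasse arrows in tors 𝒜 with brick labels S₁ and S₂ respectively, then Hom(S₁, S₂) = 0 and Hom(S₂, S₁) = 0. In particular, the set of labels of Hasse arrows ending in a fixed torsion class forms a semibrick. -/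
open CategoryTheory CategoryTheory.Limits

universe v u

attribute [local instance] CategoryTheory.Abelian.hasFiniteBiproducts

variable (C : Type u) [Category.{v} C] [Abelian C]

section Aux

variable {C}

/-- If `T₁ ⋗ T` with brick label `S₁`, then any `X ∈ T₁` with `Hom(X, S₁) = 0` lies in `T`. -/
lemma mem_T_of_hom_zero {T T₁ : Set C} {S₁ : C} (h1 : IsHasseArrow C T₁ T)
    (l1 : IsBrickLabel C T₁ T S₁) {X : C} (hX : X ∈ T₁)
    (hhom : ∀ f : X ⟶ S₁, f = 0) : X ∈ T := by
  set V : Set C := {Y | Y ∈ T₁ ∧ ∀ f : Y ⟶ S₁, f = 0} with hVdef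
  have hV : IsTorsionClass C V := by
    constructor
    · intro Z hZ
      exact ⟨h1.1.zero_mem Z hZ, fun f => hZ.eq_of_src f 0⟩
    · intro A B f hf hA
      refine ⟨h1.1.quot_mem f hf hA.1, fun g => ?_⟩
      exact zero_of_epi_comp f (hA.2 (f ≫ g))
    · intro E hE h₁ h₃
      refine ⟨h1.1.ext_mem E hE h₁.1 h₃.1, fun g => ?_⟩
      have hfg : E.f ≫ g = 0 := h₁.2 (E.f ≫ g)
      have hexact := hE.exact
      have hepi : Epi E.g := hE.epi_g
      have hg : g = E.g ≫ hexact.desc g hfg := by rw [hexact.g_desc]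
      rw [hg, h₃.2 (hexact.desc g hfg), comp_zero]
  have hTV : T ⊆ V := fun Y hY => ⟨h1.2.2.1.subset hY, fun f => l1.2.1 Y hY f⟩
  have hVT₁ : V ⊆ T₁ := fun Y hY => hY.1
  rcases h1.2.2.2 V hV hTV hVT₁ with h | h
  · rw [← h]; exact ⟨hX, hhom⟩
  · exact absurd ((Limits.IsZero.iff_id_eq_zero S₁).mpr ((h ▸ l1.2.2 : S₁ ∈ V).2 (𝟙 S₁))) l1.1.1

/-- Distinct covers of the same torsion class intersect in it. -/
lemma inter_eq_of_covers {T T₁ T₂ : Set C} (h1 : IsHasseArrow C T₁ T)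
    (h2 : IsHasseArrow C T₂ T) (hne : T₁ ≠ T₂) : T₁ ∩ T₂ = T := by
  have hmeet : IsTorsionClass C (T₁ ∩ T₂) := by
    constructor
    · intro Z hZ; exact ⟨h1.1.zero_mem Z hZ, h2.1.zero_mem Z hZ⟩
    · intro A B f hf hA; exact ⟨h1.1.quot_mem f hf hA.1, h2.1.quot_mem f hf hA.2⟩
    · intro E hE ha hb
      exact ⟨h1.1.ext_mem E hE ha.1 hb.1, h2.1.ext_mem E hE ha.2 hb.2⟩
  have hT : T ⊆ T₁ ∩ T₂ := fun Y hY => ⟨h1.2.2.1.subset hY, h2.2.2.1.subset hY⟩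
  rcases h1.2.2.2 (T₁ ∩ T₂) hmeet hT Set.inter_subset_left with h | h
  · exact h
  · exfalso
    have hsub : T₁ ⊆ T₂ := by
      intro x hx
      exact ((Set.ext_iff.mp h x).mpr hx).2
    rcases h2.2.2.2 T₁ h1.1 h1.2.2.1.subset hsub with h' | h'
    · exact h1.2.2.1.ne h'.symm
    · exact hne h'

/-- Labels of distinct covers of the same torsion class are Hom-orthogonal (one direction). -/
lemma hom_zero_of_labels {T T₁ T₂ : Set C} (h1 : IsHasseArrow C T₁ T)
    (h2 : IsHasseArrow C T₂ T) (hne : T₁ ≠ T₂) {S₁ S₂ : C}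
    (l1 : IsBrickLabel C T₁ T S₁) (l2 : IsBrickLabel C T₂ T S₂)
    (f : S₁ ⟶ S₂) : f = 0 := by
  by_contra hf
  -- Step 1 : `f` is a monomorphism
  set I := Abelian.image f with hI
  set p : S₁ ⟶ I := Abelian.factorThruImage f with hp
  set ι : I ⟶ S₂ := Abelian.image.ι f with hι
  have hfac : p ≫ ι = f := Abelian.image.fac f
  have hmono : Mono f := by
    by_cases hq : ∀ q : I ⟶ S₁, q = 0
    · -- then `I ∈ T`, so `ι = 0`, so `f = 0`, contradiction
      exfalso
      have hIT₁ : I ∈ T₁ := h1.1.quot_mem p inferInstance l1.2.2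
      have hIT : I ∈ T := mem_T_of_hom_zero h1 l1 hIT₁ hq
      have : ι = 0 := l2.2.1 I hIT ι
      rw [← hfac, this, comp_zero] at hf
      exact hf rfl
    · push_neg at hq
      obtain ⟨q, hq0⟩ := hq
      have hpq : p ≫ q ≠ 0 := fun h => hq0 (zero_of_epi_comp p h)
      rcases l1.1.2 (p ≫ q) with h | h
      · exact absurd h hpq
      · -- `p` is split mono and epi, hence iso, so `f = p ≫ ι` is mono
        have : IsSplitMono p :=
          IsSplitMono.mk' ⟨q ≫ inv (p ≫ q), by rw [← Category.assoc, IsIso.hom_inv_id]⟩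
        have : IsIso p := isIso_of_mono_of_epi p
        rw [← hfac]
        exact mono_comp p ι
  -- Step 2 : the cokernel `Q` of `f` lies in `T`
  set Q := cokernel f with hQ
  set π : S₂ ⟶ Q := cokernel.π f with hπ
  have hQT₂ : Q ∈ T₂ := h2.1.quot_mem π inferInstance l2.2.2
  have hQhom : ∀ q : Q ⟶ S₂, q = 0 := by
    intro q
    rcases l2.1.2 (π ≫ q) with h | h
    · exact zero_of_epi_comp π h
    · exfalso
      have : Mono π := mono_of_mono π q
      have : f = 0 := by
        have := cokernel.condition f
        rwa [← cancel_mono π, zero_comp]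
      exact hf this
  have hQT : Q ∈ T := mem_T_of_hom_zero h2 l2 hQT₂ hQhom
  -- Step 3 : `S₂` is an extension of `Q ∈ T ⊆ T₁` by `S₁ ∈ T₁`, hence `S₂ ∈ T₁ ∩ T₂ = T`
  set E : ShortComplex C := ShortComplex.mk f π (cokernel.condition f) with hE
  have hSE : E.ShortExact := by
    refine ShortComplex.ShortExact.mk' ?_ hmono inferInstance
    exact ShortComplex.exact_of_g_is_cokernel E (cokernelIsCokernel f)
  have hS₂T₁ : S₂ ∈ T₁ := h1.1.ext_mem E hSE l1.2.2 (h1.2.2.1.subset hQT)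
  have hS₂T : S₂ ∈ T := by
    rw [← inter_eq_of_covers h1 h2 hne]; exact ⟨hS₂T₁, l2.2.2⟩
  exact l2.1.1 ((Limits.IsZero.iff_id_eq_zero S₂).mpr (l2.2.1 S₂ hS₂T (𝟙 S₂)))

end Aux

/-- Labels of distinct Hasse arrows ending at the same torsion class are Hom-orthogonal;
hence the set of such labels is a semibrick. -/

theorem stmt_8 [Noetherian C] [Artinian C] (T T₁ T₂ : Set C)
    (h1 : IsHasseArrow C T₁ T) (h2 : IsHasseArrow C T₂ T) (hne : T₁ ≠ T₂)
    (S₁ S₂ : C) (l1 : IsBrickLabel C T₁ T S₁) (l2 : IsBrickLabel C T₂ T S₂) :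
    (∀ f : S₁ ⟶ S₂, f = 0) ∧ (∀ g : S₂ ⟶ S₁, g = 0) := by
  exact ⟨hom_zero_of_labels h1 h2 hne l1 l2,
    hom_zero_of_labels h2 h1 hne.symm l2 l1⟩
end

section
/- Let 𝒜 be an abelian length category and [𝒰, 𝒯] a wide interval in tors 𝒜, i.e., 𝒲 := 𝒰^⊥ ∩ 𝒯 is a wide subcategory of 𝒜. Then the maps Φ(𝒱) := 𝒰^⊥ ∩ 𝒱 and Ψ(𝒳) := T(𝒰 ∪ 𝒳) are mutually inverse isomorphisms of complete lattices between the interval [𝒰, 𝒯] in tors 𝒜 and the lattice tors 𝒲 of torsion classes in the abelian category 𝒲. -/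
open CategoryTheory CategoryTheory.Limits

universe v u

attribute [local instance] CategoryTheory.Abelian.hasFiniteBiproducts

variable (C : Type u) [Category.{v} C] [Abelian C]

/-!
Every object `Y` has a torsion sequence `0 → t → Y → F → 0` with `t ∈ U` and `F ∈ U^⊥`: take
`t` a maximal subobject of `Y` lying in `U`, which exists as `Y` is noetherian. Applied to
`Y ∈ V` it gives `T(U ∪ (U^⊥ ∩ V)) = V`.

Conversely, for a torsion class `X` of `W = U^⊥ ∩ T`, the class `U * X` of extensions of objects
of `X` by objects of `U` is a torsion class: the torsion-free part of a quotient, resp. an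
extension, of objects of `U * X` is a quotient, resp. an extension of a quotient by a quotient,
of objects of `X` inside `W` (this is where `W` being closed under cokernels is used). Hence
`T(U ∪ X) ⊆ U * X`, and an object of `U * X` lying in `U^⊥` has zero `U`-part, so lies in `X`.
-/

section TorsionClasses

variable {C}

lemma shortExact_cokernelSequence {X Y : C} (f : X ⟶ Y) [Mono f] :
    (ShortComplex.cokernelSequence f).ShortExact :=
  .mk' (ShortComplex.cokernelSequence_exact f) ‹_› inferInstance

lemma isTorsionFreeClass_rperp (U : Set C) : IsTorsionFreeClass C (RPerp C U) where
  zero_mem _ hZ _ _ _ := hZ.eq_of_tgt _ _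
  sub_mem _ _ f _ hB A hA g := by rw [← cancel_mono f, zero_comp]; exact hB A hA _
  ext_mem E hE h₁ h₃ A hA g := by
    obtain ⟨l, hl⟩ := KernelFork.IsLimit.lift' hE.fIsKernel g (h₃ A hA _)
    rw [← hl, h₁ A hA l, zero_comp]

lemma isTorsionClass_torsClosure (S : Set C) : IsTorsionClass C (torsClosure C S) where
  zero_mem Z hZ _ hT := hT.1.zero_mem Z hZ
  quot_mem _ _ f hf hA _ hT := hT.1.quot_mem f hf (hA _ hT)
  ext_mem E hE h₁ h₃ _ hT := hT.1.ext_mem E hE (h₁ _ hT) (h₃ _ hT)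

lemma subset_torsClosure (S : Set C) : S ⊆ torsClosure C S :=
  fun _ hx _ hT => hT.2 hx

lemma torsClosure_subset {S T : Set C} (hT : IsTorsionClass C T) (h : S ⊆ T) :
    torsClosure C S ⊆ T :=
  fun _ hx => hx T ⟨hT, h⟩

lemma torsClosure_mono {S S' : Set C} (h : S ⊆ S') : torsClosure C S ⊆ torsClosure C S' :=
  fun _ hx T hT => hx T ⟨hT.1, h.trans hT.2⟩

/-- `t → pullback g π → A` is a short exact sequence, `π` being the cokernel of `t → X`. -/
lemma IsTorsionClass.pullback_mem {U : Set C} (hU : IsTorsionClass C U) {t X A : C}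
    (i : t ⟶ X) [Mono i] (ht : t ∈ U) (g : A ⟶ cokernel i) (hA : A ∈ U) :
    pullback g (cokernel.π i) ∈ U := by
  let k : t ⟶ pullback g (cokernel.π i) := pullback.lift 0 i (by simp)
  have hk : k ≫ pullback.snd _ _ = i := pullback.lift_snd _ _ _
  have : Mono k := mono_of_mono_fac hk
  refine hU.ext_mem (ShortComplex.mk k (pullback.fst _ _) (pullback.lift_fst _ _ _))
    (.mk' ?_ this inferInstance) ht hA
  rw [ShortComplex.exact_iff_exact_up_to_refinements]
  intro Y y hy
  have hπ : (y ≫ pullback.snd _ _) ≫ cokernel.π i = 0 := by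
    rw [Category.assoc, ← pullback.condition, ← Category.assoc]
    exact (congrArg (· ≫ g) hy).trans zero_comp
  refine ⟨Y, 𝟙 Y, inferInstance, Abelian.monoLift i _ hπ, ?_⟩
  apply pullback.hom_ext
  · simp only [k, Category.assoc, pullback.lift_fst, comp_zero, hy]
  · simp [k, hk]

/-- A maximal subobject of `X` lying in `U` is the torsion part of `X`. -/
lemma IsTorsionClass.exists_mono_cokernel_mem_rperp [Noetherian C] {U : Set C}
    (hU : IsTorsionClass C U) (X : C) :
    ∃ (t : C) (i : t ⟶ X), Mono i ∧ t ∈ U ∧ cokernel i ∈ RPerp C U := by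
  obtain ⟨t, ht, hmax⟩ := (wellFounded_gt (α := Subobject X)).has_min
    {s : Subobject X | (s : C) ∈ U}
    ⟨⊥, hU.zero_mem _ ((isZero_zero C).of_iso Subobject.botCoeIsoZero)⟩
  refine ⟨t, t.arrow, inferInstance, ht, fun A hA g => ?_⟩
  let s := imageSubobject (pullback.snd g (cokernel.π t.arrow))
  have hs : (s : C) ∈ U :=
    hU.quot_mem (factorThruImageSubobject _) inferInstance (hU.pullback_mem t.arrow ht g hA)
  have hts : t ≤ s :=
    Subobject.le_of_comm (pullback.lift 0 t.arrow (by simp) ≫ factorThruImageSubobject _)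
      (by simp [s, pullback.lift_snd])
  have hst : s ≤ t := (eq_or_lt_of_le hts).elim ge_of_eq (fun h => absurd h (hmax s hs))
  have hs0 : s.arrow ≫ cokernel.π t.arrow = 0 := by
    rw [← Subobject.ofLE_arrow hst, Category.assoc, cokernel.condition, comp_zero]
  have hsnd : pullback.snd g (cokernel.π t.arrow) ≫ cokernel.π t.arrow = 0 := by
    rw [← imageSubobject_arrow_comp (pullback.snd _ _), Category.assoc, hs0, comp_zero]
  rw [← cancel_epi (pullback.fst g (cokernel.π t.arrow)), pullback.condition, hsnd, comp_zero]

end TorsionClasses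

section Extensions

open ZeroObject

variable {C} {U X : Set C}

lemma mem_extStar_of_mono_s9 {t Y : C} (i : t ⟶ Y) [Mono i] (ht : t ∈ U) (hX : cokernel i ∈ X) :
    Y ∈ ExtStar C U X :=
  ⟨_, shortExact_cokernelSequence i, ht, hX, ⟨Iso.refl Y⟩⟩

lemma subset_extStar_left (hX : ∀ Z : C, IsZero Z → Z ∈ X) : U ⊆ ExtStar C U X := fun A hA =>
  ⟨ShortComplex.mk (𝟙 A) (0 : A ⟶ 0) comp_zero,
    (ShortComplex.Splitting.ofIsIsoOfIsZero _ inferInstance (isZero_zero C)).shortExact,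
    hA, hX _ (isZero_zero C), ⟨Iso.refl A⟩⟩

lemma subset_extStar_right (hU : ∀ Z : C, IsZero Z → Z ∈ U) : X ⊆ ExtStar C U X := fun A hA =>
  ⟨ShortComplex.mk (0 : 0 ⟶ A) (𝟙 A) zero_comp,
    (ShortComplex.Splitting.ofIsZeroOfIsIso _ (isZero_zero C) inferInstance).shortExact,
    hU _ (isZero_zero C), hA, ⟨Iso.refl A⟩⟩

lemma extStar_subset {T : Set C} (hT : IsTorsionClass C T) (hUT : U ⊆ T) (hXT : X ⊆ T) :
    ExtStar C U X ⊆ T := by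
  rintro Y ⟨E, hE, h₁, h₃, ⟨e⟩⟩
  exact hT.quot_mem e.hom inferInstance (hT.ext_mem E hE (hUT h₁) (hXT h₃))

/-- The `U`-part of an object of `U * X` dies in any quotient lying in `U^⊥`. -/
lemma IsTorsionClassIn.mem_of_epi_of_mem_extStar {W : Set C} (hX : IsTorsionClassIn C W X)
    {Y Z : C} (hY : Y ∈ ExtStar C U X) (p : Y ⟶ Z) [Epi p] (hZU : Z ∈ RPerp C U)
    (hZW : Z ∈ W) : Z ∈ X := by
  obtain ⟨E, hE, h₁, h₃, ⟨e⟩⟩ := hY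
  obtain ⟨q, hq⟩ := CokernelCofork.IsColimit.desc' hE.gIsCokernel (e.hom ≫ p) (hZU _ h₁ _)
  exact hX.quot_mem q (epi_of_epi_fac hq) h₃ hZW

end Extensions

section WideInterval

variable {C} {U T X : Set C}

lemma extStar_quot_mem [Noetherian C] (hU : IsTorsionClass C U) (hT : IsTorsionClass C T)
    (hUT : U ⊆ T) (hX : IsTorsionClassIn C (RPerp C U ∩ T) X) {Y Z : C}
    (hY : Y ∈ ExtStar C U X) (p : Y ⟶ Z) [Epi p] : Z ∈ ExtStar C U X := by
  obtain ⟨t, i, _, ht, hc⟩ := hU.exists_mono_cokernel_mem_rperp Z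
  have hDT := extStar_subset hT hUT (hX.subset.trans Set.inter_subset_right)
  have hZ : Z ∈ T := hT.quot_mem p ‹_› (hDT hY)
  exact mem_extStar_of_mono_s9 i ht (hX.mem_of_epi_of_mem_extStar hY (p ≫ cokernel.π i) hc
    ⟨hc, hT.quot_mem (cokernel.π i) inferInstance hZ⟩)

lemma extStar_ext_mem [Noetherian C] (hU : IsTorsionClass C U) (hT : IsTorsionClass C T)
    (hUT : U ⊆ T) (hwide : IsWide C (RPerp C U ∩ T))
    (hX : IsTorsionClassIn C (RPerp C U ∩ T) X) (E : ShortComplex C) (hE : E.ShortExact)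
    (h₁ : E.X₁ ∈ ExtStar C U X) (h₃ : E.X₃ ∈ ExtStar C U X) : E.X₂ ∈ ExtStar C U X := by
  have hDT := extStar_subset hT hUT (hX.subset.trans Set.inter_subset_right)
  obtain ⟨t, i, _, ht, hF⟩ := hU.exists_mono_cokernel_mem_rperp E.X₂
  have hFW : cokernel i ∈ RPerp C U ∩ T :=
    ⟨hF, hT.quot_mem (cokernel.π i) inferInstance (hT.ext_mem E hE (hDT h₁) (hDT h₃))⟩
  -- `F := cokernel i` is an extension of a quotient of `E.X₃` by the image of `E.X₁`
  let m := E.f ≫ cokernel.π i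
  have hIW : image m ∈ RPerp C U ∩ T :=
    ⟨(isTorsionFreeClass_rperp U).sub_mem (image.ι m) inferInstance hF,
      hT.quot_mem (factorThruImage m) inferInstance (hDT h₁)⟩
  have hIX : image m ∈ X :=
    hX.mem_of_epi_of_mem_extStar h₁ (factorThruImage m) hIW.1 hIW
  have hQW := hwide.coker_mem (image.ι m) hIW hFW
  have hw : m ≫ cokernel.π (image.ι m) = 0 :=
    calc m ≫ cokernel.π (image.ι m)
        = factorThruImage m ≫ image.ι m ≫ cokernel.π (image.ι m) := by rw [image.fac_assoc]
      _ = 0 := by rw [cokernel.condition, comp_zero]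
  obtain ⟨r, hr⟩ := CokernelCofork.IsColimit.desc' hE.gIsCokernel
    (cokernel.π i ≫ cokernel.π (image.ι m)) (by rw [← Category.assoc]; exact hw)
  have : Epi r := epi_of_epi_fac hr
  have hQX := hX.mem_of_epi_of_mem_extStar h₃ r hQW.1 hQW
  exact mem_extStar_of_mono_s9 i ht
    (hX.ext_mem _ (shortExact_cokernelSequence (image.ι m)) hIX hQX)

lemma isTorsionClass_extStar [Noetherian C] (hU : IsTorsionClass C U) (hT : IsTorsionClass C T)
    (hUT : U ⊆ T) (hwide : IsWide C (RPerp C U ∩ T))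
    (hX : IsTorsionClassIn C (RPerp C U ∩ T) X) : IsTorsionClass C (ExtStar C U X) where
  zero_mem Z hZ := subset_extStar_left hX.zero_mem (hU.zero_mem Z hZ)
  quot_mem _ _ p _ hY := extStar_quot_mem hU hT hUT hX hY p
  ext_mem := extStar_ext_mem hU hT hUT hwide hX

lemma isTorsionClassIn_rperp_inter {V : Set C} (hV : IsTorsionClass C V) (hVT : V ⊆ T) :
    IsTorsionClassIn C (RPerp C U ∩ T) (RPerp C U ∩ V) where
  subset := Set.inter_subset_inter_right _ hVT
  zero_mem Z hZ := ⟨(isTorsionFreeClass_rperp U).zero_mem Z hZ, hV.zero_mem Z hZ⟩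
  quot_mem _ _ f hf hA hB := ⟨hB.1, hV.quot_mem f hf hA.2⟩
  ext_mem E hE h₁ h₃ :=
    ⟨(isTorsionFreeClass_rperp U).ext_mem E hE h₁.1 h₃.1, hV.ext_mem E hE h₁.2 h₃.2⟩

lemma torsClosure_union_rperp_inter [Noetherian C] (hU : IsTorsionClass C U) {V : Set C}
    (hV : IsTorsionClass C V) (hUV : U ⊆ V) : torsClosure C (U ∪ (RPerp C U ∩ V)) = V := by
  refine (torsClosure_subset hV (Set.union_subset hUV Set.inter_subset_right)).antisymm
    fun Y hY => ?_
  obtain ⟨t, i, _, ht, hc⟩ := hU.exists_mono_cokernel_mem_rperp Y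
  have hcV : cokernel i ∈ V := hV.quot_mem (cokernel.π i) inferInstance hY
  exact (isTorsionClass_torsClosure _).ext_mem _ (shortExact_cokernelSequence i)
    (subset_torsClosure _ (Or.inl ht)) (subset_torsClosure _ (Or.inr ⟨hc, hcV⟩))

lemma rperp_inter_torsClosure_union [Noetherian C] (hU : IsTorsionClass C U)
    (hT : IsTorsionClass C T) (hUT : U ⊆ T) (hwide : IsWide C (RPerp C U ∩ T))
    (hX : IsTorsionClassIn C (RPerp C U ∩ T) X) : RPerp C U ∩ torsClosure C (U ∪ X) = X := by
  refine Set.Subset.antisymm ?_ fun Y hY => ⟨(hX.subset hY).1, subset_torsClosure _ (Or.inr hY)⟩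
  rintro Y ⟨hYU, hY⟩
  have hYT : Y ∈ T :=
    torsClosure_subset hT (Set.union_subset hUT (hX.subset.trans Set.inter_subset_right)) hY
  have hYD : Y ∈ ExtStar C U X :=
    torsClosure_subset (isTorsionClass_extStar hU hT hUT hwide hX)
      (Set.union_subset (subset_extStar_left hX.zero_mem) (subset_extStar_right hU.zero_mem)) hY
  exact hX.mem_of_epi_of_mem_extStar hYD (𝟙 Y) hYU ⟨hYU, hYT⟩

end WideInterval

theorem stmt_9 [Noetherian C]
    (U T : Set C) (hU : IsTorsionClass C U) (hT : IsTorsionClass C T) (hUT : U ⊆ T)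
    (W : Set C) (hW : W = RPerp C U ∩ T) (hwide : IsWide C W) :
    (∀ V : Set C, IsTorsionClass C V → U ⊆ V → V ⊆ T →
      IsTorsionClassIn C W (RPerp C U ∩ V)) ∧
    (∀ X : Set C, IsTorsionClassIn C W X →
      IsTorsionClass C (torsClosure C (U ∪ X)) ∧ U ⊆ torsClosure C (U ∪ X) ∧
        torsClosure C (U ∪ X) ⊆ T) ∧
    (∀ V : Set C, IsTorsionClass C V → U ⊆ V → V ⊆ T →
      torsClosure C (U ∪ (RPerp C U ∩ V)) = V) ∧
    (∀ X : Set C, IsTorsionClassIn C W X →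
      RPerp C U ∩ torsClosure C (U ∪ X) = X) ∧
    (∀ V V' : Set C, IsTorsionClass C V → U ⊆ V → V ⊆ T →
      IsTorsionClass C V' → U ⊆ V' → V' ⊆ T →
      (V ⊆ V' ↔ RPerp C U ∩ V ⊆ RPerp C U ∩ V')) := by
  subst hW
  refine ⟨fun V hV _ hVT => isTorsionClassIn_rperp_inter hV hVT,
    fun X hX => ⟨isTorsionClass_torsClosure _, fun _ hA => subset_torsClosure _ (Or.inl hA),
      torsClosure_subset hT (Set.union_subset hUT (hX.subset.trans Set.inter_subset_right))⟩,
    fun V hV hUV _ => torsClosure_union_rperp_inter hU hV hUV,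
    fun X hX => rperp_inter_torsClosure_union hU hT hUT hwide hX,
    fun V V' hV hUV _ hV' hUV' _ => ⟨Set.inter_subset_inter_right _, fun h => ?_⟩⟩
  calc V = torsClosure C (U ∪ (RPerp C U ∩ V)) := (torsClosure_union_rperp_inter hU hV hUV).symm
    _ ⊆ torsClosure C (U ∪ (RPerp C U ∩ V')) :=
      torsClosure_mono (Set.union_subset_union_right _ h)
    _ = V' := torsClosure_union_rperp_inter hU hV' hUV'
end

section
/- Let 𝒜 be an abelian length category, 𝒯 a torsion class, and W_L(𝒯) := {X ∈ 𝒯 : for all Y ∈ 𝒯 and all g : Y → X, ker g ∈ 𝒯} the left wide subcategory. For any Serre subcategory 𝒲 of W_L(𝒯) and any morphism f : X → Y with X ∈ 𝒯 and Y ∈ F(𝒲), we have im f ∈ 𝒲 and ker f ∈ 𝒯. -/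
open CategoryTheory CategoryTheory.Limits

universe v u

attribute [local instance] CategoryTheory.Abelian.hasFiniteBiproducts

variable (C : Type u) [Category.{v} C] [Abelian C]

/-!
Call `Y` a good target if every `f : X ⟶ Y` with `X ∈ T` has `im f ∈ W` and `ker f ∈ T`. Since
`F(W)` is the smallest torsion-free class containing `W`, it suffices that good targets include `W`
and are closed under subobjects and extensions. For `Y ∈ W`, `im f` is a subobject of `Y` lying in
`W_L(T)`, and `ker f ∈ T` is the defining property of `Y ∈ W_L(T)`. For an extension
`0 → Y₁ → Y₂ → Y₃ → 0` and `f : X ⟶ Y₂`, use `Y₃` on `f ≫ g` and then `Y₁` on the restriction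
`ker (f ≫ g) ⟶ Y₁` of `f`; this gives `ker f ∈ T`, and `im f` is an extension of `im (f ≫ g)` by the
image of that restriction, both in `W`. As `W_L(T)` is closed under extensions, so is `W` there.
-/

section Images

variable {C} {X Y Z : C} (f : X ⟶ Y) (p : Y ⟶ Z)

noncomputable abbrev imageShortComplex : ShortComplex C :=
  ShortComplex.mk (image.preComp (kernel.ι (f ≫ p)) f)
    (image.map (Arrow.homMk' (f := f) (g := f ≫ p) (𝟙 X) p))
    (by
      rw [← cancel_mono (image.ι (f ≫ p)), ← cancel_epi (factorThruImage (kernel.ι (f ≫ p) ≫ f)),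
        Category.assoc, image.map_homMk'_ι]
      simp)

lemma factorThruImage_imageShortComplex_g :
    factorThruImage f ≫ (imageShortComplex f p).g = factorThruImage (f ≫ p) := by
  simpa using image.factor_map (Arrow.homMk' (f := f) (g := f ≫ p) (𝟙 X) p)

lemma imageShortComplex_exact : (imageShortComplex f p).Exact := by
  rw [ShortComplex.exact_iff_exact_up_to_refinements]
  intro A x₂ hx₂
  obtain ⟨A', π, hπ, x, hx⟩ := surjective_up_to_refinements_of_epi (factorThruImage f) x₂
  have hxker : x ≫ f ≫ p = 0 := by
    rw [← image.fac (f ≫ p), ← factorThruImage_imageShortComplex_g, Category.assoc,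
      ← reassoc_of% hx, reassoc_of% hx₂, zero_comp, comp_zero]
  refine ⟨A', π, hπ, kernel.lift _ x hxker ≫ factorThruImage (kernel.ι (f ≫ p) ≫ f), ?_⟩
  simp [imageShortComplex, hx]

lemma imageShortComplex_shortExact : (imageShortComplex f p).ShortExact := by
  have : Epi (imageShortComplex f p).g :=
    epi_of_epi_fac (factorThruImage_imageShortComplex_g f p)
  exact ⟨imageShortComplex_exact f p⟩

end Images

namespace CategoryTheory.ShortComplex.ShortExact

variable {C} {E : ShortComplex C} (hE : E.ShortExact) {X : C} (f : X ⟶ E.X₂)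

noncomputable def kernelRestriction : kernel (f ≫ E.g) ⟶ E.X₁ :=
  haveI := hE.mono_f
  hE.exact.lift (kernel.ι (f ≫ E.g) ≫ f) (by simp)

lemma kernelRestriction_f :
    hE.kernelRestriction f ≫ E.f = kernel.ι (f ≫ E.g) ≫ f :=
  haveI := hE.mono_f
  hE.exact.lift_f _ _

noncomputable def kernelKernelRestrictionIso :
    kernel (hE.kernelRestriction f) ≅ kernel f :=
  haveI := hE.mono_f
  (kernelCompMono _ E.f).symm ≪≫ kernelIsoOfEq (hE.kernelRestriction_f f) ≪≫
    { hom := kernel.lift f (kernel.ι _ ≫ kernel.ι _) (by simp)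
      inv := kernel.lift _ (kernel.lift _ (kernel.ι f) (by simp)) (by simp)
      hom_inv_id := by ext; simp
      inv_hom_id := by ext; simp }

noncomputable def imageKernelRestrictionIso :
    image (hE.kernelRestriction f) ≅ image (kernel.ι (f ≫ E.g) ≫ f) :=
  haveI := hE.mono_f
  image.isoStrongEpiMono (f := hE.kernelRestriction f ≫ E.f) (factorThruImage _)
    (image.ι _ ≫ E.f) (by simp) ≪≫
    image.eqToIso (hE.kernelRestriction_f f)

end CategoryTheory.ShortComplex.ShortExact

section TorsionClass

variable {C} {T : Set C}

lemma IsTorsionClass.mem_of_iso_s14 (hT : IsTorsionClass C T) {A B : C} (e : A ≅ B) (hA : A ∈ T) :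
    B ∈ T :=
  hT.quot_mem e.hom inferInstance hA

lemma IsTorsionClass.image_mem (hT : IsTorsionClass C T) {A B : C} (f : A ⟶ B) (hA : A ∈ T) :
    image f ∈ T :=
  hT.quot_mem (factorThruImage f) inferInstance hA

lemma IsTorsionClass.kernel_mem_of_shortExact (hT : IsTorsionClass C T) {E : ShortComplex C}
    (hE : E.ShortExact) (hE₁ : ∀ ⦃A : C⦄ (g : A ⟶ E.X₁), A ∈ T → kernel g ∈ T)
    {X : C} (f : X ⟶ E.X₂) (hf : kernel (f ≫ E.g) ∈ T) : kernel f ∈ T :=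
  hT.mem_of_iso_s14 (hE.kernelKernelRestrictionIso f) (hE₁ _ hf)

lemma mem_WL_of_mono (hT : IsTorsionClass C T) {A B : C} (i : A ⟶ B) [Mono i] (hA : A ∈ T)
    (hB : B ∈ WL C T) : A ∈ WL C T :=
  ⟨hA, fun _ g hY => hT.mem_of_iso_s14 (kernelCompMono g i) (hB.2 (g ≫ i) hY)⟩

lemma mem_WL_of_iso (hT : IsTorsionClass C T) {A B : C} (e : A ≅ B) (hA : A ∈ WL C T) :
    B ∈ WL C T :=
  mem_WL_of_mono hT e.inv (hT.mem_of_iso_s14 e hA.1) hA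

lemma WL_ext_mem (hT : IsTorsionClass C T) (E : ShortComplex C) (hE : E.ShortExact)
    (h₁ : E.X₁ ∈ WL C T) (h₃ : E.X₃ ∈ WL C T) : E.X₂ ∈ WL C T :=
  ⟨hT.ext_mem E hE h₁.1 h₃.1, fun _ g hY =>
    hT.kernel_mem_of_shortExact hE h₁.2 g (h₃.2 (g ≫ E.g) hY)⟩

variable {W : Set C}

lemma IsSerreIn.mem_of_iso_s14 (hT : IsTorsionClass C T) (hW : IsSerreIn C (WL C T) W) {A B : C}
    (e : A ≅ B) (hA : A ∈ W) : B ∈ W :=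
  hW.quot_mem e.hom inferInstance (mem_WL_of_iso hT e (hW.subset hA)) hA

def goodTargets (T W : Set C) : Set C :=
  {Y | ∀ X ∈ T, ∀ f : X ⟶ Y, image f ∈ W ∧ kernel f ∈ T}

lemma subset_goodTargets (hT : IsTorsionClass C T) (hW : IsSerreIn C (WL C T) W) :
    W ⊆ goodTargets T W := fun _ hY _ hX f =>
  ⟨hW.sub_mem (image.ι f) inferInstance
      (mem_WL_of_mono hT (image.ι f) (hT.image_mem f hX) (hW.subset hY)) hY,
    (hW.subset hY).2 f hX⟩

lemma goodTargets_zero_mem (hT : IsTorsionClass C T) (hW : IsSerreIn C (WL C T) W)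
    (Z : C) (hZ : IsZero Z) : Z ∈ goodTargets T W := by
  intro X hX f
  obtain rfl : f = 0 := hZ.eq_of_tgt f 0
  exact ⟨hW.zero_mem _ (IsZero.of_mono (image.ι (0 : X ⟶ Z)) hZ),
    hT.mem_of_iso_s14 (kernelZeroIsoSource (X := X) (Y := Z)).symm hX⟩

lemma goodTargets_sub_mem (hT : IsTorsionClass C T) (hW : IsSerreIn C (WL C T) W)
    {A B : C} (i : A ⟶ B) [Mono i] (hB : B ∈ goodTargets T W) :
    A ∈ goodTargets T W := by
  intro X hX f
  obtain ⟨him, hker⟩ := hB X hX (f ≫ i)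
  refine ⟨hW.mem_of_iso_s14 hT ?_ him, hT.mem_of_iso_s14 (kernelCompMono f i) hker⟩
  exact (image.isoStrongEpiMono (f := f ≫ i) (factorThruImage f) (image.ι f ≫ i) (by simp)).symm

lemma goodTargets_ext_mem (hT : IsTorsionClass C T) (hW : IsSerreIn C (WL C T) W)
    (E : ShortComplex C) (hE : E.ShortExact) (h₁ : E.X₁ ∈ goodTargets T W)
    (h₃ : E.X₃ ∈ goodTargets T W) : E.X₂ ∈ goodTargets T W := by
  intro X hX f
  obtain ⟨him₃, hker₃⟩ := h₃ X hX (f ≫ E.g)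
  have hker : kernel f ∈ T :=
    hT.kernel_mem_of_shortExact hE (fun A g hA => (h₁ A hA g).2) f hker₃
  have him₁ : image (kernel.ι (f ≫ E.g) ≫ f) ∈ W :=
    hW.mem_of_iso_s14 hT (hE.imageKernelRestrictionIso f) (h₁ _ hker₃ _).1
  have hS := imageShortComplex_shortExact f E.g
  exact ⟨hW.ext_mem _ hS (WL_ext_mem hT _ hS (hW.subset him₁) (hW.subset him₃)) him₁ him₃, hker⟩

lemma isTorsionFreeClass_goodTargets (hT : IsTorsionClass C T) (hW : IsSerreIn C (WL C T) W) :
    IsTorsionFreeClass C (goodTargets T W) :=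
  ⟨goodTargets_zero_mem hT hW, fun _ _ i _ hB => goodTargets_sub_mem hT hW i hB,
    goodTargets_ext_mem hT hW⟩

end TorsionClass

theorem stmt_14
    (T : Set C) (hT : IsTorsionClass C T)
    (W : Set C) (hW : IsSerreIn C (WL C T) W)
    {X Y : C} (f : X ⟶ Y) (hX : X ∈ T) (hY : Y ∈ torfClosure C W) :
    image f ∈ W ∧ kernel f ∈ T :=
  hY (goodTargets T W) ⟨isTorsionFreeClass_goodTargets hT hW, subset_goodTargets hT hW⟩ X hX f
end
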